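/- There exists a finite bipartite simple graph G whose DP-chromatic number is exactly 4: some 3-fold cover of G admits no coloring, while every 4-fold cover of G admits a coloring. -/

import Mathlib

open SimpleGraph

/-- A cover `(H, L)` of a simple graph `G` in the sense of Dvořák and Postle:
(C1) the sets `L u` partition the vertices of `H`;
(C2) each `L u` induces a complete subgraph of `H`;
(C3) edges of `H` between `L u` and `L v` (for `u ≠ v`) exist only when `uv ∈ E(G)`;
(C4) for every edge `uv` of `G`, the edges of `H` between `L u` and `L v` form a matching. -/
structure DPCover {V : Type*} {W : Type*} (G : SimpleGraph V) (H : SimpleGraph W) where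
  L : V → Finset W
  part : ∀ w : W, ∃! u : V, w ∈ L u
  clique : ∀ u : V, ∀ x ∈ L u, ∀ y ∈ L u, x ≠ y → H.Adj x y
  cross : ∀ u v : V, ∀ x ∈ L u, ∀ y ∈ L v, H.Adj x y → u = v ∨ G.Adj u v
  matching : ∀ u v : V, G.Adj u v → ∀ x ∈ L u, ∀ y ∈ L v, ∀ y' ∈ L v,
      H.Adj x y → H.Adj x y' → y = y'

/-- A cover is `k`-fold if every list `L u` has exactly `k` elements. -/
def DPCover.IsFold {V W : Type*} {G : SimpleGraph V} {H : SimpleGraph W}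
    (C : DPCover G H) (k : ℕ) : Prop :=
  ∀ u : V, (C.L u).card = k

/-- `G` admits an `(H, L)`-coloring: an independent set of `H` meeting each `L u` exactly once. -/
def DPCover.HasColoring {V W : Type*} {G : SimpleGraph V} {H : SimpleGraph W}
    (C : DPCover G H) : Prop :=
  ∃ I : Set W, (∀ x ∈ I, ∀ y ∈ I, ¬ H.Adj x y) ∧ (∀ u : V, ∃! x : W, x ∈ I ∧ x ∈ C.L u)

/-- `G` admits a coloring with respect to every `k`-fold cover; `χ_DP(G)` is the least such `k`. -/
def DPColorable {V : Type*} (G : SimpleGraph V) (k : ℕ) : Prop :=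
  ∀ (W : Type) (H : SimpleGraph W) (C : DPCover G H), C.IsFold k → C.HasColoring

/-!
Take `G = K_{3,27}`, with left side `α = Fin 3` and right side `α → α`. The 3-fold cover with
no colouring has lists `{u} × α` and, between left vertex `i` and right vertex `s`, a single
cover edge, from colour `s i` at `i` to colour `i` at `s`: if the left side is coloured by `a`,
every colour at the right vertex `a` is blocked.

Conversely, given lists of size `4 > 3`, colour the left side arbitrarily. Each left vertex
blocks at most one colour at a right vertex, because cover edges form a matching, so every
right vertex keeps a free colour; right vertices do not interact.
-/

open Finset

namespace DPCover

variable {V W : Type*} {G : SimpleGraph V} {H : SimpleGraph W} (C : DPCover G H)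

theorem eq_of_mem_L {w : W} {u v : V} (hu : w ∈ C.L u) (hv : w ∈ C.L v) : u = v :=
  (C.part w).unique hu hv

theorem not_adj_of_not_adj {c : V → W} (hc : ∀ u, c u ∈ C.L u) {u v : V} (huv : ¬ G.Adj u v) :
    ¬ H.Adj (c u) (c v) := by
  intro h
  rcases C.cross u v _ (hc u) _ (hc v) h with rfl | h'
  · exact H.loopless.irrefl _ h
  · exact huv h'

theorem hasColoring_of_forall_not_adj {c : V → W} (hc : ∀ u, c u ∈ C.L u)
    (hind : ∀ u v, ¬ H.Adj (c u) (c v)) : C.HasColoring := by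
  refine ⟨Set.range c, ?_, fun u => ⟨c u, ⟨⟨u, rfl⟩, hc u⟩, ?_⟩⟩
  · rintro _ ⟨u, rfl⟩ _ ⟨v, rfl⟩
    exact hind u v
  · rintro _ ⟨⟨v, rfl⟩, hv⟩
    rw [C.eq_of_mem_L (hc v) hv]

theorem card_filter_adj_le_one [DecidableRel H.Adj] {u w : V} (huw : u ≠ w) {x : W}
    (hx : x ∈ C.L u) : #((C.L w).filter (H.Adj x)) ≤ 1 := by
  refine card_le_one.mpr fun y hy y' hy' => ?_
  rw [mem_filter] at hy hy'
  rcases C.cross u w x hx y hy.1 hy.2 with rfl | hG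
  · exact absurd rfl huw
  · exact C.matching u w hG x hx y hy.1 y' hy'.1 hy.2 hy'.2

theorem exists_mem_forall_not_adj {k : ℕ} (hC : C.IsFold k) {c : V → W} (hc : ∀ u, c u ∈ C.L u)
    {w : V} {S : Finset V} (hw : w ∉ S) (hS : #S < k) :
    ∃ y ∈ C.L w, ∀ u ∈ S, ¬ H.Adj (c u) y := by
  classical
  set blocked := (C.L w).filter fun y => ∃ u ∈ S, H.Adj (c u) y
  have hsub : blocked ⊆ S.biUnion fun u => (C.L w).filter (H.Adj (c u)) := by
    intro y hy
    obtain ⟨hyL, u, hu, hadj⟩ := mem_filter.mp hy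
    exact mem_biUnion.mpr ⟨u, hu, mem_filter.mpr ⟨hyL, hadj⟩⟩
  have hcard : #blocked < #(C.L w) :=
    calc #blocked ≤ #(S.biUnion fun u => (C.L w).filter (H.Adj (c u))) := card_le_card hsub
      _ ≤ #S * 1 := card_biUnion_le_card_mul _ _ _ fun u hu =>
          C.card_filter_adj_le_one (ne_of_mem_of_not_mem hu hw) (hc u)
      _ < #(C.L w) := by rwa [mul_one, hC w]
  obtain ⟨y, hyL, hyB⟩ := exists_mem_notMem_of_card_lt_card hcard
  exact ⟨y, hyL, fun u hu hadj => hyB (mem_filter.mpr ⟨hyL, u, hu, hadj⟩)⟩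

end DPCover

theorem dpColorable_completeBipartiteGraph {α β : Type*} [Fintype α] {k : ℕ}
    (hk : Fintype.card α < k) : DPColorable (completeBipartiteGraph α β) k := by
  intro W H C hC
  have hne : ∀ u, (C.L u).Nonempty := fun u => card_pos.mp (by rw [hC u]; omega)
  choose c₀ hc₀ using hne
  have hfree : ∀ b, ∃ y ∈ C.L (.inr b), ∀ u ∈ univ.map .inl, ¬ H.Adj (c₀ u) y := fun b =>
    C.exists_mem_forall_not_adj hC hc₀ (by simp) (by simpa using hk)
  choose d hd hdfree using hfree
  let c : α ⊕ β → W := Sum.elim (c₀ ∘ .inl) d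
  have hc : ∀ u, c u ∈ C.L u := by rintro (a | b) <;> simp [c, hc₀, hd]
  refine C.hasColoring_of_forall_not_adj hc ?_
  rintro (a | b) (a' | b')
  · exact C.not_adj_of_not_adj hc (by simp)
  · exact hdfree b' (.inl a) (by simp)
  · exact fun h => hdfree b (.inl a') (by simp) h.symm
  · exact C.not_adj_of_not_adj hc (by simp)

theorem Finset.mem_singleton_product_univ {α β : Type*} [Fintype β] {a : α} {x : α × β} :
    x ∈ ({a} : Finset α) ×ˢ (univ : Finset β) ↔ x.1 = a := by
  simp only [mem_product, mem_singleton, mem_univ, and_true]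

section UncolorableCover

variable (α : Type*)

def uncolorableCoverGraph : SimpleGraph ((α ⊕ (α → α)) × α) :=
  SimpleGraph.fromRel fun x y => x.1 = y.1 ∨ ∃ i s, x = (.inl i, s i) ∧ y = (.inr s, i)

variable [Fintype α]

def uncolorableCover : DPCover (completeBipartiteGraph α (α → α)) (uncolorableCoverGraph α) where
  L u := {u} ×ˢ univ
  part w := ⟨w.1, mem_singleton_product_univ.mpr rfl,
    fun _ hu => (mem_singleton_product_univ.mp hu).symm⟩
  clique u x hx y hy hxy := by
    rw [mem_singleton_product_univ] at hx hy
    exact ⟨hxy, .inl (.inl (hx.trans hy.symm))⟩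
  cross u v x hx y hy h := by
    rw [mem_singleton_product_univ] at hx hy
    subst hx hy
    obtain ⟨-, (h | ⟨i, s, rfl, rfl⟩) | (h | ⟨i, s, rfl, rfl⟩)⟩ := h <;> simp_all
  matching u v huv x hx y hy y' hy' h h' := by
    rw [mem_singleton_product_univ] at hx hy hy'
    have hne : x.1 ≠ y.1 ∧ x.1 ≠ y'.1 := by rw [hx, hy, hy']; exact ⟨huv.ne, huv.ne⟩
    obtain ⟨-, (h | ⟨i, s, rfl, rfl⟩) | (h | ⟨i, s, rfl, rfl⟩)⟩ := h <;>
    obtain ⟨-, (h' | ⟨i', s', h₁, rfl⟩) | (h' | ⟨i', s', rfl, h₁⟩)⟩ := h' <;> simp_all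

theorem uncolorableCover_isFold : (uncolorableCover α).IsFold (Fintype.card α) := by
  intro u
  simp [uncolorableCover]

theorem not_hasColoring_uncolorableCover : ¬ (uncolorableCover α).HasColoring := by
  rintro ⟨I, hind, hone⟩
  choose g hgI hgL using fun u => (hone u).exists
  have hg : ∀ u, g u = (u, (g u).2) := fun u =>
    Prod.ext (mem_singleton_product_univ.mp (hgL u)) rfl
  let a : α → α := fun i => (g (.inl i)).2
  let j := (g (.inr a)).2
  refine hind _ (hgI (.inl j)) _ (hgI (.inr a)) ⟨?_, .inl (.inr ⟨j, a, hg _, hg _⟩)⟩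
  rw [hg, hg (.inr a)]
  simp

end UncolorableCover

/-- There is a finite bipartite simple graph with DP-chromatic number exactly 4:
some 3-fold cover admits no coloring, while every 4-fold cover admits a coloring. -/
theorem exists_bipartite_with_DP_chromatic_number_four :
    ∃ (V : Type) (_ : Fintype V) (G : SimpleGraph V),
      G.Colorable 2 ∧
      (∃ (W : Type) (H : SimpleGraph W) (C : DPCover G H),
        C.IsFold 3 ∧ ¬ C.HasColoring) ∧
      DPColorable G 4 :=
  ⟨Fin 3 ⊕ (Fin 3 → Fin 3), inferInstance, completeBipartiteGraph _ _,
    (CompleteBipartiteGraph.bicoloring _ _).colorable,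
    ⟨_, _, uncolorableCover (Fin 3), by simpa using uncolorableCover_isFold (Fin 3),
      not_hasColoring_uncolorableCover _⟩,
    dpColorable_completeBipartiteGraph (by simp)⟩
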